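/- For every natural number n ≥ 1, a real number λ is an eigenvalue of the matrix A_n if and only if λ is a root of the n-th probabilist's Hermite polynomial, i.e., H_n(λ) = 0. -/

import Mathlib

/-!
Expanding `det (X • 1 - A_n)` along its last row gives the three-term recurrence
`χ_{n+2} = X χ_{n+1} - (n + 1) χ_n`, which is exactly the recurrence
`H_{n+2} = X H_{n+1} - (n + 1) H_n` of the Hermite polynomials (as `H_{n+1}' = (n + 1) H_n`).
Hence the characteristic polynomial of `A_n` is `H_n`, and its roots are the eigenvalues of `A_n`.
-/

open Polynomial Matrix

/-- The `n × n` tridiagonal matrix `A_n` with zero diagonal, subdiagonal entries `1`,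
and superdiagonal entries `(A_n)_{i,i+1} = i + 1`. -/
noncomputable def hermMatrix (n : ℕ) : Matrix (Fin n) (Fin n) ℝ :=
  Matrix.of fun i j =>
    if (j : ℕ) = (i : ℕ) + 1 then ((i : ℕ) + 1 : ℝ)
    else if (i : ℕ) = (j : ℕ) + 1 then 1
    else 0

namespace Polynomial

theorem derivative_hermite_succ (n : ℕ) :
    derivative (hermite (n + 1)) = (n + 1 : ℤ[X]) * hermite n := by
  induction n with
  | zero => simp [hermite_succ]
  | succ n ih =>
    rw [hermite_succ (n + 1), derivative_sub, derivative_mul, derivative_X, one_mul, ih,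
      derivative_mul, hermite_succ n]
    simp only [derivative_add, derivative_natCast, derivative_one, zero_add, zero_mul]
    push_cast
    ring

theorem hermite_add_two (n : ℕ) :
    hermite (n + 2) = X * hermite (n + 1) - (n + 1 : ℤ[X]) * hermite n := by
  rw [hermite_succ (n + 1), derivative_hermite_succ]

end Polynomial

namespace Matrix

variable {R : Type*} [CommRing R]

def tridiagonal (a b c : ℕ → R) (n : ℕ) : Matrix (Fin n) (Fin n) R :=
  of fun i j =>
    if (i : ℕ) = j then a i
    else if (j : ℕ) = i + 1 then b i
    else if (i : ℕ) = j + 1 then c j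
    else 0

theorem det_succ_column_of_eq_zero {n : ℕ} (M : Matrix (Fin (n + 1)) (Fin (n + 1)) R)
    (k j : Fin (n + 1)) (h : ∀ i ≠ k, M i j = 0) :
    M.det = (-1) ^ (k + j : ℕ) * M k j * (M.submatrix k.succAbove j.succAbove).det := by
  rw [det_succ_column M j, Fintype.sum_eq_single k (fun i hi => by rw [h i hi]; ring)]

variable (a b c : ℕ → R)

theorem tridiagonal_submatrix_last (n : ℕ) :
    (tridiagonal a b c (n + 1)).submatrix (Fin.last n).succAbove (Fin.last n).succAbove =
      tridiagonal a b c n := by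
  ext i j
  simp [tridiagonal, Fin.succAbove_last]

theorem tridiagonal_apply_eq_zero {n : ℕ} {i j : Fin n} (hij : (i : ℕ) ≠ j)
    (hsup : (j : ℕ) ≠ i + 1) (hsub : (i : ℕ) ≠ j + 1) : tridiagonal a b c n i j = 0 := by
  simp [tridiagonal, hij, hsup, hsub]

theorem det_tridiagonal_add_two (n : ℕ) :
    (tridiagonal a b c (n + 2)).det =
      a (n + 1) * (tridiagonal a b c (n + 1)).det - b n * c n * (tridiagonal a b c n).det := by
  -- Expand along the last row, whose nonzero entries are `a (n + 1)` and `c n`;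
  -- the minor of `c n` has `b n` as the only nonzero entry of its last column.
  have hlast : (Fin.last n).castSucc.succAbove (Fin.last n) = Fin.last (n + 1) := by
    simp [Fin.succAbove]
  have hminor : ((tridiagonal a b c (n + 2)).submatrix (Fin.last (n + 1)).succAbove
      (Fin.last n).castSucc.succAbove).det = b n * (tridiagonal a b c n).det := by
    have hsub : ((tridiagonal a b c (n + 2)).submatrix (Fin.last (n + 1)).succAbove
        (Fin.last n).castSucc.succAbove).submatrix (Fin.last n).succAbove (Fin.last n).succAbove =
          tridiagonal a b c n := by
      ext i j
      have hj : (Fin.last n).castSucc.succAbove j.castSucc = j.castSucc.castSucc := by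
        simp [Fin.succAbove, Fin.lt_def]
      simp [tridiagonal, Fin.succAbove_last, hj]
    rw [det_succ_column_of_eq_zero _ (Fin.last n) (Fin.last n), hsub]
    · simp [hlast, tridiagonal, ← two_mul]
    · intro i hi
      have := Fin.val_ne_of_ne hi
      have := i.isLt
      rw [submatrix_apply, hlast, Fin.succAbove_last, tridiagonal_apply_eq_zero] <;>
        simp only [Fin.val_last, Fin.val_castSucc] at * <;> omega
  rw [det_succ_row _ (Fin.last (n + 1)),
    Fintype.sum_eq_add (Fin.last (n + 1)) (Fin.last n).castSucc (Fin.castSucc_lt_last _).ne' ?_,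
    tridiagonal_submatrix_last, hminor]
  · have : n ≠ n + 1 + 1 := by omega
    simp [tridiagonal, ← two_mul, this]
    ring
  · rintro j ⟨h1, h2⟩
    have := Fin.val_ne_of_ne h1
    have := Fin.val_ne_of_ne h2
    have := j.isLt
    rw [tridiagonal_apply_eq_zero, mul_zero, zero_mul] <;>
      simp only [Fin.val_last, Fin.val_castSucc] at * <;> omega

theorem det_tridiagonal_hermite (n : ℕ) :
    (tridiagonal (fun _ => X) (fun i => -(i + 1 : R[X])) (fun _ => -1) n).det =
      (hermite n).map (Int.castRingHom R) := by
  induction n using Nat.twoStepInduction with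
  | zero => simp
  | one => simp [tridiagonal, hermite_succ]
  | more n ih₀ ih₁ =>
    rw [det_tridiagonal_add_two, ih₀, ih₁, hermite_add_two]
    simp only [Polynomial.map_sub, Polynomial.map_mul, Polynomial.map_X, Polynomial.map_add,
      Polynomial.map_natCast, Polynomial.map_one]
    ring

theorem exists_mulVec_eq_smul_iff_isRoot_charpoly {K ι : Type*} [Field K] [Fintype ι]
    [DecidableEq ι] (M : Matrix ι ι K) (l : K) :
    (∃ v, v ≠ 0 ∧ M *ᵥ v = l • v) ↔ M.charpoly.IsRoot l := by
  rw [IsRoot, eval_charpoly, ← exists_mulVec_eq_zero_iff]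
  simp [sub_mulVec, sub_eq_zero, eq_comm]

end Matrix

theorem charmatrix_hermMatrix (n : ℕ) :
    charmatrix (hermMatrix n) =
      tridiagonal (fun _ => X) (fun i => -(i + 1 : ℝ[X])) (fun _ => -1) n := by
  ext i j
  simp only [charmatrix_apply, hermMatrix, tridiagonal, of_apply, diagonal_apply, Fin.ext_iff]
  split_ifs <;> simp_all

theorem charpoly_hermMatrix (n : ℕ) :
    (hermMatrix n).charpoly = (hermite n).map (Int.castRingHom ℝ) := by
  rw [charpoly, charmatrix_hermMatrix, det_tridiagonal_hermite]

theorem stmt_2_general (n : ℕ) (l : ℝ) :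
    (∃ v : Fin n → ℝ, v ≠ 0 ∧ (hermMatrix n).mulVec v = l • v) ↔
      Polynomial.aeval l (Polynomial.hermite n) = 0 := by
  rw [exists_mulVec_eq_smul_iff_isRoot_charpoly, charpoly_hermMatrix, IsRoot, eval_map,
    aeval_def, algebraMap_int_eq]

/-- A real number `λ` is an eigenvalue of `A_n` (i.e. `A_n v = λ v` for some nonzero
vector `v`) if and only if `λ` is a root of the `n`-th probabilist's Hermite polynomial. -/
theorem stmt_2 (n : ℕ) (hn : 1 ≤ n) (l : ℝ) :
    (∃ v : Fin n → ℝ, v ≠ 0 ∧ (hermMatrix n).mulVec v = l • v) ↔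
      Polynomial.aeval l (Polynomial.hermite n) = 0 :=
  stmt_2_general n l
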